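/- (Locality Chen–Fox–Lyndon theorem) Let (X,≤) be a well-ordered set equipped with a locality relation ⊤. Any word w in W_⊤(X) has a unique factorisation w = w_1^{i_1}···w_k^{i_k} where w_1 > ··· > w_k in the lexicographic order are locality Lyndon words and i_1,…,i_k ≥ 1. -/

import Mathlib

/-!
Existence: the factorisation of a word into its letters is a factorisation into Lyndon words,
and if `u < v` are Lyndon words then so is `u ++ v`. Building the word from the right, one
letter at a time, and merging the new front factor with the next one while it is smaller
yields a nonincreasing factorisation.

Uniqueness: in a nonincreasing Lyndon factorisation the last factor is the smallest nonempty
suffix of the word, so it is determined by the word and can be peeled off.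

Locality comes for free: every factor is a subword of the locality word.
-/

noncomputable section

/-- The strict lexicographic order on words induced by a strict order on letters.
A shorter word is smaller than any word extending it. -/
def wlt {X : Type*} [LT X] (w v : List X) : Prop := List.Lex (· < ·) w v

/-- A Lyndon word: a nonempty word that is lexicographically (strictly) smaller than all of
its proper suffixes. -/
def IsLyndon {X : Type*} [LT X] (w : List X) : Prop :=
  w ≠ [] ∧ ∀ u v : List X, u ≠ [] → v ≠ [] → w = u ++ v → wlt w v

/-- A locality word for the locality relation `t`: a word whose letters are pairwise
`t`-related. -/
def LocWord {X : Type*} (t : X → X → Prop) (w : List X) : Prop := w.Pairwise t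

/-- Two words are `t`-related if each letter of the first is `t`-related to each letter of
the second. -/
def WordRel {X : Type*} (t : X → X → Prop) (w v : List X) : Prop :=
  ∀ a ∈ w, ∀ b ∈ v, t a b

namespace List

theorem Lex.append_of_not_prefix {α : Type*} {r : α → α → Prop} {u v : List α}
    (h : Lex r u v) (hp : ¬ u <+: v) (z z' : List α) : Lex r (u ++ z) (v ++ z') := by
  induction h with
  | nil => exact absurd nil_prefix hp
  | rel hab => exact .rel hab
  | cons _ ih => exact .cons (ih fun h => hp (cons_prefix_cons.2 ⟨rfl, h⟩))

theorem suffix_append_iff {α : Type*} {s u r : List α} :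
    s <:+ u ++ r ↔ s <:+ r ∨ ∃ a, a <:+ u ∧ s = a ++ r := by
  constructor
  · rintro ⟨p, hp⟩
    rcases append_eq_append_iff.1 hp with ⟨a, rfl, rfl⟩ | ⟨c, rfl, rfl⟩
    · exact .inr ⟨a, suffix_append p a, rfl⟩
    · exact .inl (suffix_append c s)
  · rintro (h | ⟨a, ha, rfl⟩)
    · exact h.trans (suffix_append u r)
    · exact suffix_append_self_iff.2 ha

end List

section Lyndon

variable {X : Type*} [LinearOrder X]

theorem IsLyndon.lt_of_isSuffix {w s : List X} (hw : IsLyndon w) (hs : s <:+ w) (hs0 : s ≠ [])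
    (hsw : s ≠ w) : w < s := by
  obtain ⟨p, rfl⟩ := hs
  exact hw.2 p s (by rintro rfl; exact hsw rfl) hs0 rfl

theorem isLyndon_of_lt_of_isSuffix {w : List X} (hw0 : w ≠ [])
    (h : ∀ s, s <:+ w → s ≠ [] → s ≠ w → w < s) : IsLyndon w := by
  refine ⟨hw0, fun p s hp hs hw => h s ⟨p, hw.symm⟩ hs ?_⟩
  rintro rfl
  exact hp (List.self_eq_append_left.1 hw)

theorem isLyndon_singleton (x : X) : IsLyndon [x] :=
  isLyndon_of_lt_of_isSuffix (by simp) fun s hs hs0 hsx => by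
    rcases List.suffix_cons_iff.1 hs with h | h
    · exact absurd h hsx
    · exact absurd (List.suffix_nil.1 h) hs0

theorem IsLyndon.append_lt_append_of_isSuffix {u a : List X} (hu : IsLyndon u) (ha : a <:+ u)
    (ha0 : a ≠ []) (hau : a ≠ u) (z z' : List X) : u ++ z < a ++ z' := by
  have hlen : a.length < u.length := lt_of_le_of_ne ha.length_le fun h => hau (ha.eq_of_length h)
  exact (hu.lt_of_isSuffix ha ha0 hau).append_of_not_prefix
    (fun hp => absurd hp.length_le (not_le.2 hlen)) z z'

theorem IsLyndon.append {u v : List X} (hu : IsLyndon u) (hv : IsLyndon v) (huv : u < v) :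
    IsLyndon (u ++ v) := by
  have hkey : u ++ v < v := by
    by_cases hp : u <+: v
    · obtain ⟨t, rfl⟩ := hp
      have ht : t ≠ [] := by rintro rfl; simp at huv
      exact List.append_left_lt
        (hv.lt_of_isSuffix (List.suffix_append u t) ht (by simpa using hu.1))
    · simpa using huv.append_of_not_prefix hp v []
  refine isLyndon_of_lt_of_isSuffix (by simp [hu.1]) fun s hs hs0 hsuv => ?_
  rcases List.suffix_append_iff.1 hs with hsv | ⟨a, ha, rfl⟩
  · rcases eq_or_ne s v with rfl | hsv'
    · exact hkey
    · exact hkey.trans (hv.lt_of_isSuffix hsv hs0 hsv')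
  · rcases eq_or_ne a [] with rfl | ha0
    · simpa using hkey
    · exact hu.append_lt_append_of_isSuffix ha ha0 (by rintro rfl; exact hsuv rfl) v v

def IsLyndonFactorization (l : List (List X)) : Prop :=
  (∀ u ∈ l, IsLyndon u) ∧ l.Pairwise (· ≥ ·)

namespace IsLyndonFactorization

theorem nil : IsLyndonFactorization ([] : List (List X)) := ⟨by simp, .nil⟩

theorem sublist {l l' : List (List X)} (h : IsLyndonFactorization l) (hl' : l'.Sublist l) :
    IsLyndonFactorization l' :=
  ⟨fun v hv => h.1 v (hl'.subset hv), h.2.sublist hl'⟩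

theorem eq_nil_of_flatten_eq_nil {l : List (List X)} (hl : IsLyndonFactorization l)
    (h : l.flatten = []) : l = [] := by
  rw [List.flatten_eq_nil_iff] at h
  exact List.eq_nil_iff_forall_not_mem.2 fun u hu => (hl.1 u hu).1 (h u hu)

end IsLyndonFactorization

def lyndonCons : List X → List (List X) → List (List X)
  | u, [] => [u]
  | u, v :: l => if u < v then lyndonCons (u ++ v) l else u :: v :: l

theorem flatten_lyndonCons (u : List X) (l : List (List X)) :
    (lyndonCons u l).flatten = u ++ l.flatten := by
  induction l generalizing u with
  | nil => simp [lyndonCons]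
  | cons v l ih => unfold lyndonCons; split_ifs <;> simp [ih]

theorem IsLyndonFactorization.lyndonCons_of_isLyndon {u : List X} {l : List (List X)}
    (hu : IsLyndon u) (hl : IsLyndonFactorization l) : IsLyndonFactorization (lyndonCons u l) := by
  induction l generalizing u with
  | nil => exact ⟨by simpa [lyndonCons] using hu, List.pairwise_singleton _ _⟩
  | cons v l ih =>
    unfold lyndonCons
    split_ifs with huv
    · exact ih (hu.append (hl.1 v (by simp)) huv) (hl.sublist (List.sublist_cons_self v l))
    · have hvu : v ≤ u := not_lt.1 huv
      refine ⟨?_, List.pairwise_cons.2 ⟨?_, hl.2⟩⟩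
      · rintro x (_ | ⟨_, hx⟩)
        exacts [hu, hl.1 x hx]
      · rintro x (_ | ⟨_, hx⟩)
        exacts [hvu, ((List.pairwise_cons.1 hl.2).1 x hx).trans hvu]

theorem exists_isLyndonFactorization (w : List X) :
    ∃ l, IsLyndonFactorization l ∧ l.flatten = w := by
  induction w with
  | nil => exact ⟨[], .nil, rfl⟩
  | cons x w ih =>
    obtain ⟨l, hl, rfl⟩ := ih
    exact ⟨lyndonCons [x] l, hl.lyndonCons_of_isLyndon (isLyndon_singleton x),
      flatten_lyndonCons [x] l⟩

theorem IsLyndon.le_append_of_isSuffix {u a : List X} (hu : IsLyndon u) (ha : a <:+ u)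
    (ha0 : a ≠ []) (z : List X) : u ≤ a ++ z := by
  rcases eq_or_ne a u with rfl | hau
  · -- core's `IsPrefix.le` concludes core's `≤` on lists, which unfolds to `¬ a ++ z < a`
    exact not_lt.1 (List.prefix_append a z).le
  · simpa using (hu.append_lt_append_of_isSuffix ha ha0 hau [] z).le

theorem le_of_isSuffix_flatten {l : List (List X)} {v s : List X}
    (hl : ∀ u ∈ l, IsLyndon u ∧ v ≤ u) (hs0 : s ≠ []) (hs : s <:+ l.flatten) :
    v ≤ s := by
  induction l with
  | nil => exact absurd (List.suffix_nil.1 hs) hs0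
  | cons u l ih =>
    have ih' := ih fun x hx => hl x (.tail u hx)
    rw [List.flatten_cons, List.suffix_append_iff] at hs
    rcases hs with hs | ⟨a, ha, rfl⟩
    · exact ih' hs
    · rcases eq_or_ne a [] with rfl | ha0
      · exact ih' List.suffix_rfl
      · exact (hl u (by simp)).2.trans ((hl u (by simp)).1.le_append_of_isSuffix ha ha0 _)

theorem IsLyndonFactorization.last_le_of_isSuffix {l : List (List X)} {v s : List X}
    (h : IsLyndonFactorization (l ++ [v])) (hs0 : s ≠ []) (hs : s <:+ (l ++ [v]).flatten) :
    v ≤ s := by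
  refine le_of_isSuffix_flatten (fun u hu => ⟨h.1 u hu, ?_⟩) hs0 hs
  rcases List.mem_append.1 hu with hu | hu
  · exact (List.pairwise_append.1 h.2).2.2 u hu v (by simp)
  · rw [List.mem_singleton.1 hu]

theorem IsLyndonFactorization.eq_of_flatten_eq {l m : List (List X)}
    (hl : IsLyndonFactorization l) (hm : IsLyndonFactorization m) (h : l.flatten = m.flatten) :
    l = m := by
  induction l using List.reverseRecOn generalizing m with
  | nil => exact (hm.eq_nil_of_flatten_eq_nil h.symm).symm
  | append_singleton l v ih =>
    rcases m.eq_nil_or_concat with rfl | ⟨m, v', rfl⟩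
    · exact absurd (hl.eq_nil_of_flatten_eq_nil h) (by simp)
    rw [List.concat_eq_append] at hm h ⊢
    have hv : v = v' := le_antisymm
      (hl.last_le_of_isSuffix (hm.1 v' (by simp)).1 (by rw [h]; simp))
      (hm.last_le_of_isSuffix (hl.1 v (by simp)).1 (by rw [← h]; simp))
    subst hv
    have hflat : l.flatten = m.flatten := by simpa using h
    have hinit := ih (hl.sublist (List.sublist_append_left l [v]))
      (hm.sublist (List.sublist_append_left m [v])) hflat
    rw [hinit]

end Lyndon

theorem statement13_general {X : Type*} [LinearOrder X]
    (t : X → X → Prop)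
    (w : List X) (hw : LocWord t w) :
    ∃! l : List (List X),
      (∀ u ∈ l, IsLyndon u ∧ LocWord t u) ∧
      l.Pairwise (fun a b => a = b ∨ wlt b a) ∧
      l.flatten = w := by
  have hnonincr : (fun a b : List X => a = b ∨ wlt b a) = (· ≥ ·) := by
    funext a b
    exact propext (or_congr eq_comm Iff.rfl)
  obtain ⟨l, hl, rfl⟩ := exists_isLyndonFactorization w
  refine ⟨l, ⟨fun u hu => ⟨hl.1 u hu, hw.sublist (List.sublist_flatten_of_mem hu)⟩,
    hnonincr ▸ hl.2, rfl⟩, ?_⟩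
  rintro m ⟨hm, hm_sorted, hflat⟩
  exact (hl.eq_of_flatten_eq ⟨fun u hu => (hm u hu).1, hnonincr ▸ hm_sorted⟩ hflat.symm).symm

/-- Locality Chen–Fox–Lyndon theorem, Theorem `thm:lynloc` (i).
Let `(X, ≤)` be a well-ordered set with a locality relation `⊤`.  Any locality word
`w ∈ W_⊤(X)` has a unique factorisation `w = w_1^{i_1} ⋯ w_k^{i_k}` with
`w_1 > ⋯ > w_k` locality Lyndon words; equivalently, `w` is in a unique way the
concatenation of a lexicographically nonincreasing list of locality Lyndon words. -/
theorem statement13 {X : Type*} [LinearOrder X] [WellFoundedLT X]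
    (t : X → X → Prop) (hsymm : ∀ a b, t a b → t b a)
    (w : List X) (hw : LocWord t w) :
    ∃! l : List (List X),
      (∀ u ∈ l, IsLyndon u ∧ LocWord t u) ∧
      l.Pairwise (fun a b => a = b ∨ wlt b a) ∧
      l.flatten = w :=
  statement13_general t w hw
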